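/- arXiv:0908.0440 — 3 statements merged into one kernel-verified Lean document; each statement's English description precedes it below -/
import Mathlib

section
/- (Schwartz–Zippel) Let f be a nonzero polynomial of total degree at most d in n variables over a field K, and let X be a finite nonempty subset of K. If x₁, ..., x_n are chosen independently and uniformly at random from X, then the probability that f(x₁, ..., x_n) = 0 is at most d / |X|. -/
open scoped Classical

theorem schwartz_zippel_general {K : Type*} [Field K] {n d : ℕ}
    (f : MvPolynomial (Fin n) K) (hf : f ≠ 0) (hdeg : f.totalDegree ≤ d)
    (X : Finset K) :
    (((Fintype.piFinset fun _ : Fin n => X).filter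
        (fun x => MvPolynomial.eval x f = 0)).card : ℝ) / ((X.card : ℝ) ^ n)
      ≤ (d : ℝ) / (X.card : ℝ) := by
  have h := MvPolynomial.schwartz_zippel_totalDegree hf X
  rw [← NNRat.cast_le (K := ℝ)] at h
  push_cast at h
  calc _ ≤ (f.totalDegree : ℝ) / X.card := h
    _ ≤ (d : ℝ) / X.card := by gcongr

/-- Schwartz–Zippel lemma: for a nonzero `n`-variate polynomial `f` of total
degree at most `d` over a field `K` and a finite nonempty `X ⊆ K`, the
probability that `f` vanishes at a uniformly random point of `Xⁿ` is at most
`d / |X|`. -/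
theorem schwartz_zippel {K : Type*} [Field K] {n d : ℕ}
    (f : MvPolynomial (Fin n) K) (hf : f ≠ 0) (hdeg : f.totalDegree ≤ d)
    (X : Finset K) (hX : X.Nonempty) :
    (((Fintype.piFinset fun _ : Fin n => X).filter
        (fun x => MvPolynomial.eval x f = 0)).card : ℝ) / ((X.card : ℝ) ^ n)
      ≤ (d : ℝ) / (X.card : ℝ) :=
  schwartz_zippel_general f hf hdeg X
end

section
/- Let ρ be a positive semidefinite operator on a finite-dimensional complex Hilbert space H with spectral decomposition ρ = Σᵢ₌₁ⁿ pᵢ |eᵢ⟩⟨eᵢ| (pᵢ > 0, {eᵢ} orthonormal), and set ẽᵢ = √pᵢ eᵢ. Then vectors q̃₁, ..., q̃_t ∈ H (with t ≥ n) satisfy Σⱼ |q̃ⱼ⟩⟨q̃ⱼ| = ρ if and only if there exists a t × t unitary matrix U = [u_{ij}] such that q̃ⱼ = Σᵢ₌₁ⁿ u_{ij} ẽᵢ for all j (where ẽᵢ = 0 for i > n). -/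
/-!
For a family `q : ι → E` let `A_q : E → ℓ²(ι)` be `w ↦ (⟪q j, w⟫)ⱼ`. Then `∑ⱼ |qⱼ⟩⟨qⱼ| = A_q† A_q`,
so two families have the same ensemble operator iff `‖A_q w‖ = ‖A_r w‖` for every `w`. In that case
`A_r w ↦ A_q w` is a well-defined isometry on the range of `A_r`; it extends to a unitary of `ℓ²(ι)`,
and the matrix of its inverse mixes the `rᵢ` into the `qⱼ`. Conversely, if `qⱼ = ∑ᵢ uᵢⱼ rᵢ` with `U`
unitary, then `A_q = Uᴴ A_r`, and `Uᴴ` preserves inner products. The spectral decomposition of `ρ` is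
the ensemble operator of the `ẽᵢ`, and padding a family by zero vectors does not change it.
-/

open Finset Matrix
open scoped InnerProductSpace

theorem LinearMap.exists_linearIsometry_comp_eq_of_norm_eq {𝕜 F V : Type*} [RCLike 𝕜]
    [AddCommGroup F] [Module 𝕜 F] [NormedAddCommGroup V] [InnerProductSpace 𝕜 V]
    [FiniteDimensional 𝕜 V] (A B : F →ₗ[𝕜] V) (h : ∀ w, ‖A w‖ = ‖B w‖) :
    ∃ T : V →ₗᵢ[𝕜] V, ∀ w, T (B w) = A w := by
  have hker : LinearMap.ker B ≤ LinearMap.ker A := fun w hw => by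
    rw [LinearMap.mem_ker] at hw ⊢
    rw [← norm_eq_zero, h w, hw, norm_zero]
  let L : LinearMap.range B →ₗ[𝕜] V :=
    (LinearMap.ker B).liftQ A hker ∘ₗ B.quotKerEquivRange.symm.toLinearMap
  have hL : ∀ w, L ⟨B w, LinearMap.mem_range_self B w⟩ = A w := fun w => by
    simp [L, LinearMap.quotKerEquivRange_symm_apply_image]
  let L' : LinearMap.range B →ₗᵢ[𝕜] V :=
    { L with
      norm_map' := by
        rintro ⟨_, w, rfl⟩
        simpa [hL] using h w }
  exact ⟨L'.extend, fun w => (L'.extend_apply ⟨B w, LinearMap.mem_range_self B w⟩).trans (hL w)⟩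

theorem Fin.sum_univ_dite_lt {M : Type*} [AddCommMonoid M] {n t : ℕ} (h : n ≤ t)
    (f : Fin n → M) : ∑ i : Fin t, (if hi : (i : ℕ) < n then f ⟨i, hi⟩ else 0) = ∑ i, f i := by
  obtain ⟨k, rfl⟩ := Nat.exists_eq_add_of_le h
  simp [Fin.sum_univ_add]

section Ensemble

variable (𝕜 : Type*) {E ι : Type*} [RCLike 𝕜] [NormedAddCommGroup E] [InnerProductSpace 𝕜 E]

def analysisMap (q : ι → E) : E →ₗ[𝕜] EuclideanSpace 𝕜 ι :=
  (WithLp.linearEquiv 2 𝕜 (ι → 𝕜)).symm.toLinearMap ∘ₗ LinearMap.pi fun j => innerₛₗ 𝕜 (q j)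

variable {𝕜}

@[simp]
theorem analysisMap_apply (q : ι → E) (w : E) (j : ι) : analysisMap 𝕜 q w j = ⟪q j, w⟫_𝕜 := rfl

variable (𝕜) [Fintype ι]

/-- The operator `∑ⱼ |qⱼ⟩⟨qⱼ|`. -/
def ensembleOp (q : ι → E) (w : E) : E := ∑ j, ⟪q j, w⟫_𝕜 • q j

variable {𝕜}

theorem inner_analysisMap_right (q : ι → E) (x : EuclideanSpace 𝕜 ι) (w : E) :
    ⟪x, analysisMap 𝕜 q w⟫_𝕜 = ⟪∑ i, x i • q i, w⟫_𝕜 := by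
  simp [PiLp.inner_apply, sum_inner, inner_smul_left, mul_comm]

theorem inner_ensembleOp_left (q : ι → E) (w v : E) :
    ⟪ensembleOp 𝕜 q w, v⟫_𝕜 = ⟪analysisMap 𝕜 q w, analysisMap 𝕜 q v⟫_𝕜 := by
  rw [inner_analysisMap_right]; rfl

theorem ensembleOp_real_sqrt_smul [Module ℝ E] [IsScalarTower ℝ 𝕜 E] (p : ι → ℝ)
    (hp : ∀ i, 0 ≤ p i) (e : ι → E) (w : E) :
    ensembleOp 𝕜 (fun i => √(p i) • e i) w = ∑ i, (p i : 𝕜) • ⟪e i, w⟫_𝕜 • e i := by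
  refine sum_congr rfl fun i _ => ?_
  simp only [RCLike.real_smul_eq_coe_smul (K := 𝕜)]
  rw [inner_smul_left, smul_smul, smul_smul, RCLike.conj_ofReal, mul_right_comm,
    ← RCLike.ofReal_mul, Real.mul_self_sqrt (hp i)]

theorem ensembleOp_dite_lt {n t : ℕ} (h : n ≤ t) (f : Fin n → E) (g : Fin t → E)
    (hg : ∀ i, g i = if hi : (i : ℕ) < n then f ⟨i, hi⟩ else 0) :
    ensembleOp 𝕜 g = ensembleOp 𝕜 f := by
  ext w
  rw [ensembleOp, ensembleOp, ← Fin.sum_univ_dite_lt h]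
  refine sum_congr rfl fun i _ => ?_
  rw [hg]
  split_ifs <;> simp

variable [DecidableEq ι]

theorem exists_unitary_of_linearIsometry_analysisMap {q r : ι → E}
    (T : EuclideanSpace 𝕜 ι →ₗᵢ[𝕜] EuclideanSpace 𝕜 ι)
    (hT : ∀ w, T (analysisMap 𝕜 r w) = analysisMap 𝕜 q w) :
    ∃ U ∈ unitaryGroup ι 𝕜, ∀ j, q j = ∑ i, U i j • r i := by
  let T' := T.toLinearIsometryEquiv rfl
  let std := EuclideanSpace.basisFun ι 𝕜
  let b := std.map T'.symm
  refine ⟨std.toBasis.toMatrix b, std.toMatrix_orthonormalBasis_mem_unitary b, fun j => ?_⟩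
  refine ext_inner_right 𝕜 fun w => ?_
  calc ⟪q j, w⟫_𝕜 = ⟪T' (b j), T' (analysisMap 𝕜 r w)⟫_𝕜 := by
        simp [b, T', std, hT, EuclideanSpace.inner_single_left]
    _ = ⟪∑ i, b j i • r i, w⟫_𝕜 := by rw [T'.inner_map_map, inner_analysisMap_right]
    _ = ⟪∑ i, std.toBasis.toMatrix b i j • r i, w⟫_𝕜 := by
        simp [Module.Basis.toMatrix_apply, std]

theorem analysisMap_eq_toEuclideanCLM_conjTranspose {q r : ι → E} {U : Matrix ι ι 𝕜}
    (hq : ∀ j, q j = ∑ i, U i j • r i) (w : E) :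
    analysisMap 𝕜 q w = toEuclideanCLM (n := ι) (𝕜 := 𝕜) Uᴴ (analysisMap 𝕜 r w) := by
  ext j
  simp [hq, sum_inner, inner_smul_left, mulVec, dotProduct]

theorem ensembleOp_eq_iff_exists_unitary {q r : ι → E} :
    ensembleOp 𝕜 q = ensembleOp 𝕜 r ↔ ∃ U ∈ unitaryGroup ι 𝕜, ∀ j, q j = ∑ i, U i j • r i := by
  constructor
  · intro h
    have hnorm : ∀ w, ‖analysisMap 𝕜 q w‖ = ‖analysisMap 𝕜 r w‖ := fun w => by
      simp only [@norm_eq_sqrt_re_inner 𝕜, ← inner_ensembleOp_left, h]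
    obtain ⟨T, hT⟩ :=
      LinearMap.exists_linearIsometry_comp_eq_of_norm_eq (analysisMap 𝕜 q) (analysisMap 𝕜 r) hnorm
    exact exists_unitary_of_linearIsometry_analysisMap T hT
  · rintro ⟨U, hU, hq⟩
    have hU' : toEuclideanCLM (n := ι) (𝕜 := 𝕜) Uᴴ ∈
        unitary (EuclideanSpace 𝕜 ι →L[𝕜] EuclideanSpace 𝕜 ι) :=
      Unitary.map_mem _ (Unitary.star_mem hU)
    ext w
    refine ext_inner_right 𝕜 fun v => ?_
    simp only [inner_ensembleOp_left, analysisMap_eq_toEuclideanCLM_conjTranspose hq,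
      ContinuousLinearMap.inner_map_map_of_mem_unitary hU']

end Ensemble

theorem ensemble_iff_unitary_general {H : Type*} [NormedAddCommGroup H]
    [InnerProductSpace ℂ H] {n t : ℕ} (hnt : n ≤ t)
    (p : Fin n → ℝ) (hp : ∀ i, 0 < p i) (e : Fin n → H)
    (et : Fin t → H)
    (het : ∀ i : Fin t, et i =
      if h : (i : ℕ) < n then Real.sqrt (p ⟨i, h⟩) • e ⟨i, h⟩ else 0)
    (q : Fin t → H) :
    (∀ w : H, ∑ j, (inner ℂ (q j) w : ℂ) • q j
        = ∑ i, (p i : ℂ) • (inner ℂ (e i) w : ℂ) • e i) ↔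
      ∃ U ∈ Matrix.unitaryGroup (Fin t) ℂ,
        ∀ j, q j = ∑ i, U i j • et i := by
  have hρ : ensembleOp ℂ et = fun w => ∑ i, (p i : ℂ) • ⟪e i, w⟫_ℂ • e i := by
    rw [ensembleOp_dite_lt hnt (fun i => √(p i) • e i) et het]
    exact funext (ensembleOp_real_sqrt_smul p (fun i => (hp i).le) e)
  rw [← funext_iff, ← hρ]
  exact ensembleOp_eq_iff_exists_unitary

/-- (Hughston–Jozsa–Wootters) Let `ρ = Σᵢ pᵢ |eᵢ⟩⟨eᵢ|` with `pᵢ > 0` and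
`{eᵢ}` orthonormal, and set `ẽᵢ = √pᵢ eᵢ` (extended by `0` for `i > n`).
Vectors `q̃₁, …, q̃_t` (with `t ≥ n`) satisfy `Σⱼ |q̃ⱼ⟩⟨q̃ⱼ| = ρ` iff there is a
`t × t` unitary `U` with `q̃ⱼ = Σᵢ u_{ij} ẽᵢ` for all `j`. -/
theorem ensemble_iff_unitary {H : Type*} [NormedAddCommGroup H]
    [InnerProductSpace ℂ H] [FiniteDimensional ℂ H] {n t : ℕ} (hnt : n ≤ t)
    (p : Fin n → ℝ) (hp : ∀ i, 0 < p i) (e : Fin n → H) (he : Orthonormal ℂ e)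
    (et : Fin t → H)
    (het : ∀ i : Fin t, et i =
      if h : (i : ℕ) < n then Real.sqrt (p ⟨i, h⟩) • e ⟨i, h⟩ else 0)
    (q : Fin t → H) :
    (∀ w : H, ∑ j, (inner ℂ (q j) w : ℂ) • q j
        = ∑ i, (p i : ℂ) • (inner ℂ (e i) w : ℂ) • e i) ↔
      ∃ U ∈ Matrix.unitaryGroup (Fin t) ℂ,
        ∀ j, q j = ∑ i, U i j • et i :=
  ensemble_iff_unitary_general hnt p hp e et het q
end

section
/- Let ψ ∈ H_A ⊗ H_B ⊗ H_C be a unit vector with Schmidt decomposition ψ = Σᵢ₌₁ⁿ ẽᵢ ⊗ fᵢ where ẽᵢ ∈ H_A ⊗ H_B are orthogonal and {fᵢ} ⊂ H_C is orthonormal. Suppose there exist linear maps A : H_A → H_A, B : H_B → H_B, C : H_C → H_C and a unit vector φ ∈ H_A ⊗ H_B, c₀ ∈ H_C such that (A ⊗ B ⊗ C)ψ = φ ⊗ c₀. Then there exists φ' in span{ẽ₁, ..., ẽ_n} with (A ⊗ B)φ' = φ; in particular, the Schmidt rank of φ (as an element of H_A ⊗ H_B) is at most the maximal Schmidt rank over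 span{ẽ₁, ..., ẽ_n}. -/
open scoped TensorProduct

/-- The Schmidt rank of a bipartite vector: the minimal number of simple
tensors needed to express it. -/
noncomputable def schmidtRank {HA HB : Type*} [AddCommGroup HA] [Module ℂ HA]
    [AddCommGroup HB] [Module ℂ HB] (v : HA ⊗[ℂ] HB) : ℕ :=
  sInf {k : ℕ | ∃ (a : Fin k → HA) (b : Fin k → HB), v = ∑ i, a i ⊗ₜ[ℂ] b i}

/-!
Pick a functional `g` on `H_C` with `g c₀ = 1` and contract the third tensor factor with
`g ∘ C`. Applied to `(A ⊗ B ⊗ C) ψ = φ ⊗ c₀` this gives `(A ⊗ B) (Σᵢ g (C fᵢ) ẽᵢ) = φ`, so `φ`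
is the image under `A ⊗ B` of a vector of `span {ẽᵢ}`. A local operation `A ⊗ B` cannot raise
the Schmidt rank, which gives the bound.
-/

open TensorProduct Module

theorem schmidtRank_map_le {HA HB HA' HB' : Type*}
    [AddCommGroup HA] [Module ℂ HA] [AddCommGroup HB] [Module ℂ HB]
    [AddCommGroup HA'] [Module ℂ HA'] [AddCommGroup HB'] [Module ℂ HB']
    (A : HA →ₗ[ℂ] HA') (B : HB →ₗ[ℂ] HB') (v : HA ⊗[ℂ] HB) :
    schmidtRank (map A B v) ≤ schmidtRank v := by
  obtain ⟨a, b, hv⟩ : schmidtRank v ∈ {k : ℕ | ∃ (a : Fin k → HA) (b : Fin k → HB),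
      v = ∑ i, a i ⊗ₜ[ℂ] b i} := Nat.sInf_mem (exists_sum_tmul_eq v)
  refine Nat.sInf_le ⟨fun i ↦ A (a i), fun i ↦ B (b i), ?_⟩
  conv_lhs => rw [hv]
  simp only [map_sum, map_tmul]

theorem map_sum_smul_eq_of_map_sum_tmul_eq_tmul {R ι M M' P P' : Type*} [CommSemiring R]
    [Fintype ι] [AddCommMonoid M] [Module R M] [AddCommMonoid M'] [Module R M']
    [AddCommMonoid P] [Module R P] [AddCommMonoid P'] [Module R P']
    (A : M →ₗ[R] M') (C : P →ₗ[R] P') (e : ι → M) (f : ι → P) {φ : M'} {c : P'}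
    (h : map A C (∑ i, e i ⊗ₜ f i) = φ ⊗ₜ c) (g : Dual R P') (hg : g c = 1) :
    A (∑ i, g (C (f i)) • e i) = φ := by
  have := congrArg ((TensorProduct.rid R M').toLinearMap ∘ₗ g.lTensor M') h
  simpa [hg] using this

theorem exists_mem_span_map_eq_of_map_sum_tmul_eq_tmul {K ι M M' P P' : Type*} [Field K]
    [Fintype ι] [AddCommGroup M] [Module K M] [AddCommGroup M'] [Module K M']
    [AddCommGroup P] [Module K P] [AddCommGroup P'] [Module K P']
    (A : M →ₗ[K] M') (C : P →ₗ[K] P') (e : ι → M) (f : ι → P) {φ : M'} {c : P'}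
    (h : map A C (∑ i, e i ⊗ₜ f i) = φ ⊗ₜ c) (hc : c ≠ 0) :
    ∃ φ' ∈ Submodule.span K (Set.range e), A φ' = φ := by
  obtain ⟨g, hg⟩ := Projective.exists_dual_eq_one K hc
  refine ⟨_, ?_, map_sum_smul_eq_of_map_sum_tmul_eq_tmul A C e f h g hg⟩
  exact Submodule.sum_mem _ fun i _ ↦ Submodule.smul_mem _ _ (Submodule.subset_span ⟨i, rfl⟩)

theorem tripartite_to_bipartite_pullback_general
    {HA HB HC : Type*}
    [NormedAddCommGroup HA] [InnerProductSpace ℂ HA]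
    [NormedAddCommGroup HB] [InnerProductSpace ℂ HB]
    [NormedAddCommGroup HC] [InnerProductSpace ℂ HC]
    {n : ℕ} (et : Fin n → HA ⊗[ℂ] HB)
    (f : Fin n → HC)
    (ψ : (HA ⊗[ℂ] HB) ⊗[ℂ] HC) (hψ : ψ = ∑ i, et i ⊗ₜ[ℂ] f i)
    (A : HA →ₗ[ℂ] HA) (B : HB →ₗ[ℂ] HB) (C : HC →ₗ[ℂ] HC)
    (φ : HA ⊗[ℂ] HB) (c₀ : HC) (hc₀ : c₀ ≠ 0)
    (hconv : TensorProduct.map (TensorProduct.map A B) C ψ = φ ⊗ₜ[ℂ] c₀) :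
    (∃ φ' ∈ Submodule.span ℂ (Set.range et), TensorProduct.map A B φ' = φ) ∧
      ∃ φ' ∈ Submodule.span ℂ (Set.range et),
        schmidtRank φ ≤ schmidtRank φ' := by
  subst hψ
  obtain ⟨φ', hφ'_mem, hφ'⟩ :=
    exists_mem_span_map_eq_of_map_sum_tmul_eq_tmul (map A B) C et f hconv hc₀
  exact ⟨⟨φ', hφ'_mem, hφ'⟩, φ', hφ'_mem, hφ' ▸ schmidtRank_map_le A B φ'⟩

/-- If `(A ⊗ B ⊗ C) ψ = φ ⊗ c₀` with `ψ = Σᵢ ẽᵢ ⊗ fᵢ` a Schmidt decomposition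
(`{fᵢ}` orthonormal) and `c₀ ≠ 0`, then some `φ'` in the span of the `ẽᵢ`
satisfies `(A ⊗ B) φ' = φ`; in particular the Schmidt rank of `φ` is at most
the maximal Schmidt rank over that span. -/
theorem tripartite_to_bipartite_pullback
    {HA HB HC : Type*}
    [NormedAddCommGroup HA] [InnerProductSpace ℂ HA] [FiniteDimensional ℂ HA]
    [NormedAddCommGroup HB] [InnerProductSpace ℂ HB] [FiniteDimensional ℂ HB]
    [NormedAddCommGroup HC] [InnerProductSpace ℂ HC] [FiniteDimensional ℂ HC]
    {n : ℕ} (et : Fin n → HA ⊗[ℂ] HB) (hind : LinearIndependent ℂ et)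
    (f : Fin n → HC) (hf : Orthonormal ℂ f)
    (ψ : (HA ⊗[ℂ] HB) ⊗[ℂ] HC) (hψ : ψ = ∑ i, et i ⊗ₜ[ℂ] f i)
    (A : HA →ₗ[ℂ] HA) (B : HB →ₗ[ℂ] HB) (C : HC →ₗ[ℂ] HC)
    (φ : HA ⊗[ℂ] HB) (c₀ : HC) (hc₀ : c₀ ≠ 0)
    (hconv : TensorProduct.map (TensorProduct.map A B) C ψ = φ ⊗ₜ[ℂ] c₀) :
    (∃ φ' ∈ Submodule.span ℂ (Set.range et), TensorProduct.map A B φ' = φ) ∧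
      ∃ φ' ∈ Submodule.span ℂ (Set.range et),
        schmidtRank φ ≤ schmidtRank φ' :=
  tripartite_to_bipartite_pullback_general et f ψ hψ A B C φ c₀ hc₀ hconv
end
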